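/- Let k₂(t,s) := (1/6)·s(1−t)(2t−s²−t²) for s ≤ t and k₂(t,s) := (1/6)·t(1−s)(2s−t²−s²) for s > t. Then K₂₁ := sup_{t∈[0,1]} ∫₀¹ |∂k₂/∂t(t,s)| ds ≤ 5/24. -/

import Mathlib

/-!
Crude but sufficient: on the unit square `|∂k₂/∂t| ≤ 5/24` pointwise (each branch is a cubic
polynomial whose factors are controlled by `0 ≤ s, t ≤ 1` and the branch condition), and the
integral runs over an interval of length one.
-/

open Set MeasureTheory

/-- The formula for `∂k₂/∂t`, where `k₂` is the Green's function of `u'''' = g`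
on `(0,1)` with `u(0) = u(1) = u''(0) = u''(1) = 0`. -/
noncomputable def dk2dt (t s : ℝ) : ℝ :=
  if s ≤ t then (1 / 6) * (s * (-6 * t + s ^ 2 + 3 * t ^ 2 + 2))
  else (1 / 6) * ((1 - s) * (-s ^ 2 + 2 * s - 3 * t ^ 2))

theorem abs_dk2dt_le {t s : ℝ} (ht : t ∈ Icc (0 : ℝ) 1) (hs : s ∈ Icc (0 : ℝ) 1) :
    |dk2dt t s| ≤ 5 / 24 := by
  obtain ⟨ht0, ht1⟩ := ht
  obtain ⟨hs0, hs1⟩ := hs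
  rw [dk2dt, abs_le]
  split_ifs with h
  · constructor <;> nlinarith [mul_nonneg hs0 (sq_nonneg (t - 1)), mul_nonneg hs0 (sub_nonneg.2 h),
      pow_nonneg hs0 3]
  · have h1s : 0 ≤ 1 - s := sub_nonneg.2 hs1
    constructor <;> nlinarith [mul_nonneg h1s (sq_nonneg t), mul_nonneg h1s (sq_nonneg (s - 1)),
      mul_nonneg h1s (mul_nonneg ht0 (sub_nonneg.2 (not_le.1 h).le))]

theorem intervalIntegral_abs_dk2dt_le {t : ℝ} (ht : t ∈ Icc (0 : ℝ) 1) :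
    ∫ s in (0 : ℝ)..1, |dk2dt t s| ≤ 5 / 24 := by
  have hbound : ∀ s ∈ uIoc (0 : ℝ) 1, ‖|dk2dt t s|‖ ≤ 5 / 24 := fun s hs => by
    rw [uIoc_of_le zero_le_one] at hs
    simpa using abs_dk2dt_le ht (Ioc_subset_Icc_self hs)
  simpa using (le_abs_self _).trans (intervalIntegral.norm_integral_le_of_norm_le_const hbound)

/-- `K₂₁ = sup_{t∈[0,1]} ∫₀¹ |∂k₂/∂t(t,s)| ds ≤ 5/24`. -/
theorem stmt_15 :
    sSup ((fun t : ℝ => ∫ s in (0:ℝ)..1, |dk2dt t s|) '' Set.Icc (0:ℝ) 1) ≤ 5 / 24 := by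
  refine Real.sSup_le ?_ (by norm_num)
  rintro _ ⟨t, ht, rfl⟩
  exact intervalIntegral_abs_dk2dt_le ht
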